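/- (Optimal numerical lower bound) Let N ≥ 1 and let α_1,…,α_N, γ_1,…,γ_N be real numbers such that there exists at least one probability space (Ω, P) with measurable events A_1,…,A_N satisfying P(A_i) = α_i and Σ_{j=1}^N P(A_i ∩ A_j) = γ_i for all i. Then the infimum of P(⋃_{i=1}^N A_i), taken over all probability spaces and measurable events A_1,…,A_N satisfying P(A_i) = α_i and Σ_{j=1}^N P(A_i ∩ A_j) = γ_i for all i, is equal to the infimum of Σ_{i=1}^N Σ_{k=1}^N a_i(k)/k over all real numbers a_i(k) ≥ 0 (i, k ∈ {1,…,N}) satisfying Σ_{k=1}^N a_i(k) = α_i and Σ_{k=1}^N k·a_i(k) = γ_i for all i, and Σ_{i=1}^N a_i(k) ≥ k·a_j(k) for all j, k ∈ {1,…,N}. -/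

import Mathlib

/-!
Given events, the masses `a i k = P (A i ∩ {exactly k of the events occur})` form a feasible
point of the linear program with objective `P (⋃ i, A i)`: on the level set where exactly `k`
events occur, `∑ j, 1_{A j} = k`. Conversely, a feasible point with objective at most `1` is
realised on `[0, 1)`: the level sets become consecutive blocks of lengths
`q k = ∑ i, a i k / k`, and inside block `k` the events are produced by McNaughton's
wrap-around rule, which applies because `a i k ≤ q k`. Feasible points with objective above `1`
do not change the infimum, since every probability of a union is at most `1`.
-/

open MeasureTheory Set Function

section CoverCount

variable {Ω ι : Type*} [Fintype ι]

open scoped Classical in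
noncomputable def coverCount (A : ι → Set Ω) (x : Ω) : ℕ :=
  (Finset.univ.filter fun i => x ∈ A i).card

lemma natCast_coverCount {R : Type*} [AddCommMonoidWithOne R] (A : ι → Set Ω) (x : Ω) :
    (coverCount A x : R) = ∑ i, (A i).indicator 1 x := by
  classical
  simp [coverCount, Set.indicator_apply]

lemma coverCount_congr {A A' : ι → Set Ω} {x : Ω} (h : ∀ i, x ∈ A i ↔ x ∈ A' i) :
    coverCount A x = coverCount A' x := by
  classical
  unfold coverCount
  exact congrArg Finset.card (Finset.filter_congr fun i _ => h i)

lemma exists_mem_of_coverCount_pos {A : ι → Set Ω} {x : Ω} (h : 0 < coverCount A x) :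
    ∃ i, x ∈ A i := by
  classical
  obtain ⟨i, hi⟩ := Finset.card_pos.mp h
  exact ⟨i, (Finset.mem_filter.mp hi).2⟩

lemma coverCount_mem_Icc {A : ι → Set Ω} {x : Ω} {i : ι} (hx : x ∈ A i) :
    coverCount A x ∈ Finset.Icc 1 (Fintype.card ι) := by
  classical
  exact Finset.mem_Icc.mpr
    ⟨Finset.card_pos.mpr ⟨i, by simpa using hx⟩, Finset.card_le_univ _⟩

variable [MeasurableSpace Ω] {A : ι → Set Ω}

lemma measurable_coverCount (hA : ∀ i, MeasurableSet (A i)) : Measurable (coverCount A) := by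
  have h : coverCount A = fun x => ∑ i, (A i).indicator 1 x :=
    funext fun x => by simpa using natCast_coverCount (R := ℕ) A x
  rw [h]
  exact Finset.measurable_sum _ fun i _ => measurable_one.indicator (hA i)

lemma sum_measureReal_inter_of_coverCount_eq (μ : Measure Ω) [IsFiniteMeasure μ]
    (hA : ∀ i, MeasurableSet (A i)) {E : Set Ω} (hE : MeasurableSet E) {k : ℕ}
    (hk : ∀ x ∈ E, coverCount A x = k) :
    ∑ i, μ.real (E ∩ A i) = k * μ.real E := by
  have h : ∑ i, μ (E ∩ A i) = k * μ E := calc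
    ∑ i, μ (E ∩ A i) = ∑ i, ∫⁻ x in E, (A i).indicator 1 x ∂μ := by
      refine Finset.sum_congr rfl fun i _ => ?_
      rw [lintegral_indicator_one (hA i), Measure.restrict_apply (hA i), inter_comm]
    _ = ∫⁻ x in E, (coverCount A x : ENNReal) ∂μ := by
      rw [← lintegral_finsetSum _ fun i _ => measurable_one.indicator (hA i)]
      simp only [natCast_coverCount]
    _ = k * μ E := by
      rw [setLIntegral_congr_fun hE fun x hx => by rw [hk x hx], setLIntegral_const]
  simp only [measureReal_def]
  rw [← ENNReal.toReal_sum fun i _ => measure_ne_top μ _, h, ENNReal.toReal_mul,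
    ENNReal.toReal_natCast]

end CoverCount

section LevelPartition

variable {Ω ι : Type*} [Fintype ι] [MeasurableSpace Ω]

structure IsLevelPartition (A : ι → Set Ω) (n : ℕ) (B : ℕ → Set Ω) : Prop where
  measurableSet : ∀ k, MeasurableSet (B k)
  pairwiseDisjoint : (↑(Finset.Icc 1 n) : Set ℕ).PairwiseDisjoint B
  subset_biUnion : ∀ i, A i ⊆ ⋃ k ∈ Finset.Icc 1 n, B k
  coverCount_eq : ∀ k ∈ Finset.Icc 1 n, ∀ x ∈ B k, coverCount A x = k

lemma isLevelPartition_coverCount {A : ι → Set Ω} (hA : ∀ i, MeasurableSet (A i)) :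
    IsLevelPartition A (Fintype.card ι) fun k => coverCount A ⁻¹' {k} where
  measurableSet k := measurable_coverCount hA (measurableSet_singleton k)
  pairwiseDisjoint := pairwiseDisjoint_fiber _ _
  subset_biUnion _ _ hx := mem_biUnion (coverCount_mem_Icc hx) rfl
  coverCount_eq _ _ _ hx := hx

namespace IsLevelPartition

variable {μ : Measure Ω} [IsFiniteMeasure μ] {A : ι → Set Ω} {n : ℕ} {B : ℕ → Set Ω}
  (h : IsLevelPartition A n B) (hA : ∀ i, MeasurableSet (A i))
include h

lemma subset_iUnion {k : ℕ} (hk : k ∈ Finset.Icc 1 n) : B k ⊆ ⋃ i, A i := fun x hx =>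
  mem_iUnion.mpr <| exists_mem_of_coverCount_pos <| by
    rw [h.coverCount_eq k hk x hx]; exact (Finset.mem_Icc.mp hk).1

lemma measureReal_eq_sum {X : Set Ω} (hX : MeasurableSet X) (hXA : X ⊆ ⋃ i, A i) :
    μ.real X = ∑ k ∈ Finset.Icc 1 n, μ.real (X ∩ B k) := by
  have hXB : X ⊆ ⋃ k ∈ Finset.Icc 1 n, B k := hXA.trans (iUnion_subset h.subset_biUnion)
  rw [← measureReal_biUnion_finset (h.pairwiseDisjoint.mono fun _ => inter_subset_right)
    fun k _ => hX.inter (h.measurableSet k), ← inter_iUnion₂, inter_eq_left.mpr hXB]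

include hA

lemma measureReal_eq_sum_inter (i : ι) :
    μ.real (A i) = ∑ k ∈ Finset.Icc 1 n, μ.real (A i ∩ B k) :=
  h.measureReal_eq_sum (hA i) (Set.subset_iUnion A i)

lemma sum_measureReal_inter_eq_sum_mul (i : ι) :
    ∑ j, μ.real (A i ∩ A j) = ∑ k ∈ Finset.Icc 1 n, k * μ.real (A i ∩ B k) := calc
  ∑ j, μ.real (A i ∩ A j)
      = ∑ j, ∑ k ∈ Finset.Icc 1 n, μ.real (A i ∩ B k ∩ A j) := by
    refine Finset.sum_congr rfl fun j _ => ?_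
    rw [h.measureReal_eq_sum ((hA i).inter (hA j))
      (inter_subset_left.trans (Set.subset_iUnion A i))]
    simp only [inter_right_comm]
  _ = ∑ k ∈ Finset.Icc 1 n, k * μ.real (A i ∩ B k) := by
    rw [Finset.sum_comm]
    exact Finset.sum_congr rfl fun k hk => sum_measureReal_inter_of_coverCount_eq μ hA
      ((hA i).inter (h.measurableSet k)) fun x hx => h.coverCount_eq k hk x hx.2

lemma sum_measureReal_inter_eq_mul {k : ℕ} (hk : k ∈ Finset.Icc 1 n) :
    ∑ i, μ.real (A i ∩ B k) = k * μ.real (B k) := by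
  simp only [inter_comm (A _)]
  exact sum_measureReal_inter_of_coverCount_eq μ hA (h.measurableSet k) (h.coverCount_eq k hk)

lemma measureReal_iUnion_eq_sum :
    μ.real (⋃ i, A i) = ∑ i, ∑ k ∈ Finset.Icc 1 n, μ.real (A i ∩ B k) / k := calc
  μ.real (⋃ i, A i) = ∑ k ∈ Finset.Icc 1 n, μ.real (B k) := by
    rw [h.measureReal_eq_sum (MeasurableSet.iUnion hA) subset_rfl]
    exact Finset.sum_congr rfl fun k hk => by rw [inter_eq_right.mpr (h.subset_iUnion hk)]
  _ = ∑ i, ∑ k ∈ Finset.Icc 1 n, μ.real (A i ∩ B k) / k := by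
    rw [Finset.sum_comm]
    refine Finset.sum_congr rfl fun k hk => ?_
    have hk0 : (k : ℝ) ≠ 0 :=
      Nat.cast_ne_zero.mpr (Nat.one_le_iff_ne_zero.mp (Finset.mem_Icc.mp hk).1)
    rw [← Finset.sum_div, h.sum_measureReal_inter_eq_mul hA hk, mul_div_cancel_left₀ _ hk0]

end IsLevelPartition

end LevelPartition

section WrapAround

def consecutiveIco (c : ℝ) (l : ℕ → ℝ) (n : ℕ) : Set ℝ :=
  Ico (c + ∑ j ∈ Finset.range n, l j) (c + ∑ j ∈ Finset.range n, l j + l n)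

variable {c : ℝ} {l : ℕ → ℝ}

lemma pairwise_disjoint_consecutiveIco (hl : ∀ n, 0 ≤ l n) :
    Pairwise (Disjoint on consecutiveIco c l) := by
  have hmono : Monotone fun n => c + ∑ j ∈ Finset.range n, l j :=
    monotone_nat_of_le_succ fun n => by simp [Finset.sum_range_succ, hl n]
  intro m n hmn
  simpa only [onFun, consecutiveIco, Order.succ_eq_add_one, Finset.sum_range_succ, add_assoc]
    using hmono.pairwise_disjoint_on_Ico_succ hmn

lemma Ico_subset_biUnion_consecutiveIco (M : ℕ) :
    Ico c (c + ∑ j ∈ Finset.range M, l j) ⊆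
      ⋃ n ∈ Finset.range M, consecutiveIco c l n := by
  simpa [consecutiveIco, Finset.sum_range_succ, add_assoc] using
    Ico_subset_biUnion_Ico M fun n => c + ∑ j ∈ Finset.range n, l j

lemma consecutiveIco_subset (hl : ∀ n, 0 ≤ l n) {n M : ℕ} (hn : n < M) :
    consecutiveIco c l n ⊆ Ico c (c + ∑ j ∈ Finset.range M, l j) := by
  refine Ico_subset_Ico (le_add_of_nonneg_right (Finset.sum_nonneg fun j _ => hl j)) ?_
  rw [add_assoc, ← Finset.sum_range_succ]
  gcongr c + ?_
  exact Finset.sum_le_sum_of_subset_of_nonneg (Finset.range_subset_range.mpr hn)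
    fun j _ _ => hl j

lemma volume_consecutiveIco (n : ℕ) :
    volume (consecutiveIco c l n) = ENNReal.ofReal (l n) := by
  simp [consecutiveIco, Real.volume_Ico]

lemma lt_add_of_mem_consecutiveIco {n : ℕ} {y z : ℝ} (hy : y ∈ consecutiveIco c l n)
    (hz : z ∈ consecutiveIco c l n) : y < z + l n := by
  simp only [consecutiveIco, mem_Ico] at hy hz
  linarith

def wrap (c q : ℝ) (k : ℕ) (I : Set ℝ) : Set ℝ :=
  ⋃ m ∈ Finset.range k, (· + m * q) ⁻¹' (I ∩ consecutiveIco c (fun _ => q) m)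

variable {q : ℝ} {k : ℕ} {I : Set ℝ}

lemma mem_wrap {x : ℝ} :
    x ∈ wrap c q k I ↔ x ∈ Ico c (c + q) ∧ ∃ m < k, x + m * q ∈ I := by
  simp only [wrap, consecutiveIco, mem_iUnion, Finset.mem_range, mem_preimage, mem_inter_iff,
    mem_Ico, Finset.sum_const, Finset.card_range, nsmul_eq_mul, exists_prop]
  constructor
  · rintro ⟨m, hm, hI, h1, h2⟩
    exact ⟨⟨by linarith, by linarith⟩, m, hm, hI⟩
  · rintro ⟨⟨h1, h2⟩, m, hm, hI⟩
    exact ⟨m, hm, hI, by linarith, by linarith⟩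

lemma wrap_subset : wrap c q k I ⊆ Ico c (c + q) := fun _ hx => (mem_wrap.mp hx).1

lemma measurableSet_wrap (hI : MeasurableSet I) : MeasurableSet (wrap c q k I) :=
  Finset.measurableSet_biUnion _ fun _ _ =>
    (measurable_add_const _) (hI.inter measurableSet_Ico)

lemma eq_of_add_mul_mem (hsmall : ∀ y ∈ I, ∀ z ∈ I, y < z + q) {x : ℝ} {m m' : ℕ}
    (hm : x + m * q ∈ I) (hm' : x + m' * q ∈ I) : m = m' := by
  have hq : 0 < q := by linarith [hsmall _ hm _ hm]
  by_contra hne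
  rcases Nat.lt_or_gt_of_ne hne with h | h
  · have : (m : ℝ) + 1 ≤ m' := by exact_mod_cast h
    nlinarith [hsmall _ hm' _ hm]
  · have : (m' : ℝ) + 1 ≤ m := by exact_mod_cast h
    nlinarith [hsmall _ hm _ hm']

lemma volume_wrap (hq : 0 ≤ q) (hI : MeasurableSet I) (hIsub : I ⊆ Ico c (c + k * q))
    (hsmall : ∀ y ∈ I, ∀ z ∈ I, y < z + q) : volume (wrap c q k I) = volume I := by
  have hpieces : (↑(Finset.range k) : Set ℕ).PairwiseDisjoint
      fun m : ℕ => (· + m * q) ⁻¹' (I ∩ consecutiveIco c (fun _ => q) m) :=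
    fun m _ m' _ hne => disjoint_left.mpr fun x hx hx' =>
      hne (eq_of_add_mul_mem hsmall hx.1 hx'.1)
  have hcover : I ⊆ ⋃ m ∈ Finset.range k, consecutiveIco c (fun _ => q) m := by
    refine hIsub.trans ?_
    simpa only [Finset.sum_const, Finset.card_range, nsmul_eq_mul] using
      Ico_subset_biUnion_consecutiveIco (c := c) (l := fun _ => q) k
  rw [wrap, measure_biUnion_finset hpieces fun m _ =>
    (measurable_add_const _) (hI.inter measurableSet_Ico)]
  simp only [measure_preimage_add_right]
  have hchunks : (↑(Finset.range k) : Set ℕ).PairwiseDisjoint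
      fun m => I ∩ consecutiveIco c (fun _ => q) m :=
    Set.PairwiseDisjoint.mono ((pairwise_disjoint_consecutiveIco fun _ => hq).set_pairwise _)
      fun _ => inter_subset_right
  rw [← measure_biUnion_finset hchunks fun m _ => hI.inter measurableSet_Ico, ← inter_iUnion₂,
    inter_eq_left.mpr hcover]

lemma coverCount_wrap {ι : Type*} [Fintype ι] {I : ι → Set ℝ}
    (hdisj : Pairwise (Disjoint on I)) (hcover : Ico c (c + k * q) ⊆ ⋃ i, I i)
    (hsmall : ∀ i, ∀ y ∈ I i, ∀ z ∈ I i, y < z + q)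
    {x : ℝ} (hx : x ∈ Ico c (c + q)) : coverCount (fun i => wrap c q k (I i)) x = k := by
  have hmem : ∀ m ∈ Finset.range k, ∃ i, x + m * q ∈ I i := fun m hm => by
    have hq : 0 < q := by linarith [hx.1, hx.2]
    have hmk : (m : ℝ) + 1 ≤ k := by exact_mod_cast Finset.mem_range.mp hm
    refine mem_iUnion.mp (hcover ⟨?_, ?_⟩) <;> nlinarith [hx.1, hx.2]
  choose g hg using hmem
  classical
  unfold coverCount
  refine (Finset.card_bij (fun m hm => g m hm) (fun m hm => ?_) (fun m hm m' hm' hgm => ?_)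
    fun i hi => ?_).symm.trans (Finset.card_range k)
  · exact Finset.mem_filter.mpr ⟨Finset.mem_univ _, mem_wrap.mpr
      ⟨hx, m, Finset.mem_range.mp hm, hg m hm⟩⟩
  · exact eq_of_add_mul_mem (hsmall (g m hm)) (hg m hm) (hgm ▸ hg m' hm')
  · obtain ⟨-, m, hm, hmi⟩ := mem_wrap.mp (Finset.mem_filter.mp hi).2
    refine ⟨m, Finset.mem_range.mpr hm, ?_⟩
    by_contra hne
    exact disjoint_left.mp (hdisj hne) (hg m _) hmi

end WrapAround

lemma biUnion_inter_eq_of_subset {α ι : Type*} {s : Finset ι} {S B : ι → Set α}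
    (hB : (↑s : Set ι).PairwiseDisjoint B) (hSB : ∀ k ∈ s, S k ⊆ B k) {k : ι}
    (hk : k ∈ s) :
    (⋃ k' ∈ s, S k') ∩ B k = S k := by
  refine Subset.antisymm (fun x ⟨hx, hxB⟩ => ?_) fun x hx =>
    ⟨mem_biUnion hk hx, hSB k hk hx⟩
  obtain ⟨k', hk', hx'⟩ := mem_iUnion₂.mp hx
  obtain rfl : k' = k := by
    by_contra hne
    exact disjoint_left.mp (hB hk' hk hne) (hSB k' hk' hx') hxB
  exact hx'

/-- McNaughton's wrap-around rule: lay intervals of lengths `l i` end to end on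
`[c, c + k q)` and fold them back onto `[c, c + q)`. -/
lemma exists_kfold_cover_Ico {N k : ℕ} (c q : ℝ) (l : Fin N → ℝ) (hl0 : ∀ i, 0 ≤ l i)
    (hlq : ∀ i, l i ≤ q) (hsum : ∑ i, l i = k * q) :
    ∃ S : Fin N → Set ℝ, (∀ i, MeasurableSet (S i)) ∧ (∀ i, S i ⊆ Ico c (c + q)) ∧
      (∀ i, volume (S i) = ENNReal.ofReal (l i)) ∧
      ∀ x ∈ Ico c (c + q), coverCount S x = k := by
  set l' : ℕ → ℝ := fun n => if h : n < N then l ⟨n, h⟩ else 0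
  have hl' : ∀ i : Fin N, l' i = l i := fun i => dif_pos i.isLt
  have hl'0 : ∀ n, 0 ≤ l' n := fun n => by
    unfold l'
    split_ifs
    exacts [hl0 _, le_rfl]
  have hsum' : ∑ n ∈ Finset.range N, l' n = k * q := by
    rw [← Fin.sum_univ_eq_sum_range, ← hsum]
    exact Finset.sum_congr rfl fun i _ => hl' i
  set I : Fin N → Set ℝ := fun i => consecutiveIco c l' i
  have hsmall : ∀ i, ∀ y ∈ I i, ∀ z ∈ I i, y < z + q := fun i y hy z hz =>
    (lt_add_of_mem_consecutiveIco hy hz).trans_le (by rw [hl']; linarith [hlq i])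
  have hIsub : ∀ i, I i ⊆ Ico c (c + k * q) := fun i =>
    hsum' ▸ consecutiveIco_subset hl'0 i.isLt
  refine ⟨fun i => wrap c q k (I i), fun i => measurableSet_wrap measurableSet_Ico,
    fun i => wrap_subset, fun i => ?_, fun x hx => coverCount_wrap ?_ ?_ hsmall hx⟩
  · rw [volume_wrap (I := I i) ((hl0 i).trans (hlq i)) measurableSet_Ico (hIsub i) (hsmall i)]
    exact (volume_consecutiveIco _).trans (by rw [hl'])
  · exact (pairwise_disjoint_consecutiveIco hl'0).comp_of_injective Fin.val_injective
  · intro y hy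
    rw [← hsum'] at hy
    obtain ⟨n, hn, hyn⟩ := mem_iUnion₂.mp (Ico_subset_biUnion_consecutiveIco N hy)
    exact mem_iUnion.mpr ⟨⟨n, Finset.mem_range.mp hn⟩, hyn⟩

lemma exists_isLevelPartition_volume_inter {N : ℕ} (a : Fin N → ℕ → ℝ)
    (h0 : ∀ i, ∀ k ∈ Finset.Icc 1 N, 0 ≤ a i k)
    (hcap : ∀ j, ∀ k ∈ Finset.Icc 1 N, (k : ℝ) * a j k ≤ ∑ i, a i k)
    (hv : ∑ i, ∑ k ∈ Finset.Icc 1 N, a i k / k ≤ 1) :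
    ∃ (A : Fin N → Set ℝ) (B : ℕ → Set ℝ), (∀ i, MeasurableSet (A i)) ∧
      IsLevelPartition A N B ∧ (∀ k ∈ Finset.Icc 1 N, B k ⊆ Ico 0 1) ∧
      ∀ i, ∀ k ∈ Finset.Icc 1 N, volume (A i ∩ B k) = ENNReal.ofReal (a i k) := by
  set q : ℕ → ℝ := (↑(Finset.Icc 1 N) : Set ℕ).indicator fun k => (∑ i, a i k) / k
  have hq0 : ∀ k, 0 ≤ q k := fun k => indicator_nonneg (fun k hk =>
    div_nonneg (Finset.sum_nonneg fun i _ => h0 i k hk) k.cast_nonneg) k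
  have hkq : ∀ k ∈ Finset.Icc 1 N, ∑ i, a i k = k * q k := fun k hk => by
    have hk0 : (k : ℝ) ≠ 0 :=
      Nat.cast_ne_zero.mpr (Nat.one_le_iff_ne_zero.mp (Finset.mem_Icc.mp hk).1)
    rw [show q k = (∑ i, a i k) / k from indicator_of_mem (Finset.mem_coe.mpr hk) _]
    field_simp
  have haq : ∀ i, ∀ k ∈ Finset.Icc 1 N, a i k ≤ q k := fun i k hk =>
    le_of_mul_le_mul_left ((hcap i k hk).trans_eq (hkq k hk))
      (Nat.cast_pos.mpr (Finset.mem_Icc.mp hk).1)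
  have hqsum : ∑ k ∈ Finset.range (N + 1), q k ≤ 1 := calc
    ∑ k ∈ Finset.range (N + 1), q k = ∑ k ∈ Finset.Icc 1 N, (∑ i, a i k) / k :=
      Finset.sum_indicator_subset _ fun k hk =>
        Finset.mem_range.mpr (Nat.lt_succ_of_le (Finset.mem_Icc.mp hk).2)
    _ = ∑ i, ∑ k ∈ Finset.Icc 1 N, a i k / k := by
      simp only [Finset.sum_div]
      exact Finset.sum_comm
    _ ≤ 1 := hv
  choose! S hSmeas hSsub hSvol hScount using fun k (hk : k ∈ Finset.Icc 1 N) =>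
    exists_kfold_cover_Ico (0 + ∑ j ∈ Finset.range k, q j) (q k) (a · k) (h0 · k hk)
      (haq · k hk) (hkq k hk)
  have hAB : ∀ i, ∀ k ∈ Finset.Icc 1 N,
      (⋃ k' ∈ Finset.Icc 1 N, S k' i) ∩ consecutiveIco 0 q k = S k i := fun i k hk =>
    biUnion_inter_eq_of_subset ((pairwise_disjoint_consecutiveIco hq0).set_pairwise _)
      (fun k hk => hSsub k hk i) hk
  refine ⟨fun i => ⋃ k ∈ Finset.Icc 1 N, S k i, consecutiveIco 0 q,
    fun i => Finset.measurableSet_biUnion _ fun k hk => hSmeas k hk i,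
    ⟨fun k => measurableSet_Ico, (pairwise_disjoint_consecutiveIco hq0).set_pairwise _,
      fun i => iUnion₂_mono fun k hk => hSsub k hk i, fun k hk x hx => ?_⟩,
    fun k hk => ?_, fun i k hk => by rw [hAB i k hk, hSvol k hk i]⟩
  · rw [← hScount k hk x hx]
    refine coverCount_congr fun i => ?_
    rw [← hAB i k hk]
    exact ⟨fun h => ⟨h, hx⟩, fun h => h.1⟩
  · refine (consecutiveIco_subset hq0 (Nat.lt_succ_of_le (Finset.mem_Icc.mp hk).2)).trans ?_
    exact Ico_subset_Ico_right (by linarith)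

lemma csInf_eq_csInf_of_subset_of_inter_Iic_subset {α : Type*}
    [ConditionallyCompleteLinearOrder α] {S T : Set α} {b : α} (hST : S ⊆ T)
    (hTS : T ∩ Iic b ⊆ S) (hS : S.Nonempty) (hSb : S ⊆ Iic b) (hT : BddBelow T) :
    sInf S = sInf T := by
  refine le_antisymm (le_csInf (hS.mono hST) fun t ht => ?_) (csInf_le_csInf hT hS hST)
  rcases le_or_gt t b with htb | hbt
  · exact csInf_le (hT.mono hST) (hTS ⟨ht, htb⟩)
  · exact (csInf_le (hT.mono hST) hS.some_mem).trans ((hSb hS.some_mem).trans hbt.le)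

def unionProbValues (N : ℕ) (α γ : Fin N → ℝ) : Set ℝ :=
  {v : ℝ | ∃ (Ω : Type) (_ : MeasurableSpace Ω) (P : Measure Ω)
    (_ : IsProbabilityMeasure P) (A : Fin N → Set Ω),
    (∀ i, MeasurableSet (A i)) ∧ (∀ i, (P (A i)).toReal = α i) ∧
    (∀ i, ∑ j : Fin N, (P (A i ∩ A j)).toReal = γ i) ∧
    v = (P (⋃ i, A i)).toReal}

def lpValues (N : ℕ) (α γ : Fin N → ℝ) : Set ℝ :=
  {v : ℝ | ∃ a : Fin N → ℕ → ℝ,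
    (∀ i : Fin N, ∀ k ∈ Finset.Icc 1 N, 0 ≤ a i k) ∧
    (∀ i : Fin N, ∑ k ∈ Finset.Icc 1 N, a i k = α i) ∧
    (∀ i : Fin N, ∑ k ∈ Finset.Icc 1 N, (k : ℝ) * a i k = γ i) ∧
    (∀ j : Fin N, ∀ k ∈ Finset.Icc 1 N, ∑ i : Fin N, a i k ≥ (k : ℝ) * a j k) ∧
    v = ∑ i : Fin N, ∑ k ∈ Finset.Icc 1 N, a i k / (k : ℝ)}

section ValueSets

variable {N : ℕ} {α γ : Fin N → ℝ}

lemma unionProbValues_subset_Iic_one : unionProbValues N α γ ⊆ Iic 1 := by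
  rintro _ ⟨Ω, _, P, _, A, -, -, -, rfl⟩
  exact measureReal_le_one

lemma lpValues_bddBelow : BddBelow (lpValues N α γ) := by
  refine ⟨0, ?_⟩
  rintro _ ⟨a, h0, -, -, -, rfl⟩
  exact Finset.sum_nonneg fun i _ => Finset.sum_nonneg fun k hk =>
    div_nonneg (h0 i k hk) k.cast_nonneg

lemma unionProbValues_subset_lpValues : unionProbValues N α γ ⊆ lpValues N α γ := by
  rintro _ ⟨Ω, _, P, _, A, hA, hα, hγ, rfl⟩
  have h := isLevelPartition_coverCount hA
  rw [Fintype.card_fin] at h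
  refine ⟨fun i k => P.real (A i ∩ coverCount A ⁻¹' {k}), fun _ _ _ => measureReal_nonneg,
    fun i => (h.measureReal_eq_sum_inter hA i).symm.trans (hα i),
    fun i => (h.sum_measureReal_inter_eq_sum_mul hA i).symm.trans (hγ i), fun j k hk => ?_,
    h.measureReal_iUnion_eq_sum hA⟩
  rw [ge_iff_le, h.sum_measureReal_inter_eq_mul hA hk]
  gcongr
  exact measureReal_mono inter_subset_right

lemma lpValues_inter_Iic_one_subset : lpValues N α γ ∩ Iic 1 ⊆ unionProbValues N α γ := by
  rintro _ ⟨⟨a, h0, hα, hγ, hcap, rfl⟩, hv⟩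
  obtain ⟨A, B, hA, hB, hBsub, hvol⟩ := exists_isLevelPartition_volume_inter a h0 hcap hv
  set P := volume.restrict (Ico (0 : ℝ) 1)
  have : IsProbabilityMeasure P := ⟨by simp [P]⟩
  have hPa : ∀ i, ∀ k ∈ Finset.Icc 1 N, P.real (A i ∩ B k) = a i k := fun i k hk => by
    rw [measureReal_restrict_apply ((hA i).inter (hB.measurableSet k)),
      inter_eq_left.mpr (inter_subset_right.trans (hBsub k hk)), measureReal_def, hvol i k hk,
      ENNReal.toReal_ofReal (h0 i k hk)]
  refine ⟨ℝ, _, P, this, A, hA, fun i => ?_, fun i => ?_, ?_⟩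
  · exact (hB.measureReal_eq_sum_inter hA i).trans ((Finset.sum_congr rfl (hPa i)).trans (hα i))
  · exact (hB.sum_measureReal_inter_eq_sum_mul hA i).trans
      ((Finset.sum_congr rfl fun k hk => by rw [hPa i k hk]).trans (hγ i))
  · exact (hB.measureReal_iUnion_eq_sum hA).trans
      (Finset.sum_congr rfl fun i _ => Finset.sum_congr rfl fun k hk => by rw [hPa i k hk]) |>.symm

end ValueSets

theorem optimal_numerical_lower_bound_general (N : ℕ) (α γ : Fin N → ℝ)
    (hfeas : ∃ (Ω : Type) (_ : MeasurableSpace Ω) (P : Measure Ω)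
      (_ : IsProbabilityMeasure P) (A : Fin N → Set Ω),
      (∀ i, MeasurableSet (A i)) ∧ (∀ i, (P (A i)).toReal = α i) ∧
      (∀ i, ∑ j : Fin N, (P (A i ∩ A j)).toReal = γ i)) :
    sInf {v : ℝ | ∃ (Ω : Type) (_ : MeasurableSpace Ω) (P : Measure Ω)
        (_ : IsProbabilityMeasure P) (A : Fin N → Set Ω),
        (∀ i, MeasurableSet (A i)) ∧ (∀ i, (P (A i)).toReal = α i) ∧
        (∀ i, ∑ j : Fin N, (P (A i ∩ A j)).toReal = γ i) ∧
        v = (P (⋃ i, A i)).toReal} =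
    sInf {v : ℝ | ∃ a : Fin N → ℕ → ℝ,
        (∀ i : Fin N, ∀ k ∈ Finset.Icc 1 N, 0 ≤ a i k) ∧
        (∀ i : Fin N, ∑ k ∈ Finset.Icc 1 N, a i k = α i) ∧
        (∀ i : Fin N, ∑ k ∈ Finset.Icc 1 N, (k : ℝ) * a i k = γ i) ∧
        (∀ j : Fin N, ∀ k ∈ Finset.Icc 1 N, ∑ i : Fin N, a i k ≥ (k : ℝ) * a j k) ∧
        v = ∑ i : Fin N, ∑ k ∈ Finset.Icc 1 N, a i k / (k : ℝ)} := by
  obtain ⟨Ω, _, P, hP, A, hA, hα, hγ⟩ := hfeas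
  exact csInf_eq_csInf_of_subset_of_inter_Iic_subset unionProbValues_subset_lpValues
    lpValues_inter_Iic_one_subset ⟨_, Ω, _, P, hP, A, hA, hα, hγ, rfl⟩
    unionProbValues_subset_Iic_one lpValues_bddBelow

/-- The optimal numerical lower bound: the infimum of `P(⋃ i, A i)` over all probability
spaces and events consistent with the given `α i = P(A i)` and
`γ i = ∑ j, P(A i ∩ A j)` equals the value of the LP of Theorem 1. -/
theorem optimal_numerical_lower_bound (N : ℕ) (hN : 1 ≤ N) (α γ : Fin N → ℝ)
    (hfeas : ∃ (Ω : Type) (_ : MeasurableSpace Ω) (P : Measure Ω)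
      (_ : IsProbabilityMeasure P) (A : Fin N → Set Ω),
      (∀ i, MeasurableSet (A i)) ∧ (∀ i, (P (A i)).toReal = α i) ∧
      (∀ i, ∑ j : Fin N, (P (A i ∩ A j)).toReal = γ i)) :
    sInf {v : ℝ | ∃ (Ω : Type) (_ : MeasurableSpace Ω) (P : Measure Ω)
        (_ : IsProbabilityMeasure P) (A : Fin N → Set Ω),
        (∀ i, MeasurableSet (A i)) ∧ (∀ i, (P (A i)).toReal = α i) ∧
        (∀ i, ∑ j : Fin N, (P (A i ∩ A j)).toReal = γ i) ∧
        v = (P (⋃ i, A i)).toReal} =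
    sInf {v : ℝ | ∃ a : Fin N → ℕ → ℝ,
        (∀ i : Fin N, ∀ k ∈ Finset.Icc 1 N, 0 ≤ a i k) ∧
        (∀ i : Fin N, ∑ k ∈ Finset.Icc 1 N, a i k = α i) ∧
        (∀ i : Fin N, ∑ k ∈ Finset.Icc 1 N, (k : ℝ) * a i k = γ i) ∧
        (∀ j : Fin N, ∀ k ∈ Finset.Icc 1 N, ∑ i : Fin N, a i k ≥ (k : ℝ) * a j k) ∧
        v = ∑ i : Fin N, ∑ k ∈ Finset.Icc 1 N, a i k / (k : ℝ)} :=
  optimal_numerical_lower_bound_general N α γ hfeas
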